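/- Let X = {0,1,2}³ and let a, b be equivalence relations on X each with 9 blocks of 3 elements such that a and b permute (a∘b = b∘a) and a ∩ b = Δ. Then the number of equivalence relations A on X with 3 blocks of 9 elements each such that b ⊆ A and a ∩ A = Δ is exactly 36, and the intersection of all such A equals b. -/

import Mathlib

/-- Two equivalence relations permute if their relational compositions agree. -/
def Permutes {X : Type*} (θ ψ : Setoid X) : Prop :=
  ∀ x z : X, (∃ y, θ x y ∧ ψ y z) ↔ (∃ y, ψ x y ∧ θ y z)

/-!
Put `J = a ⊔ b`. Since `a` and `b` permute, `J = a ∘ b`, and since `a ⊓ b = ⊥` every `J`-class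
consists of exactly `|a-class| = 3` classes of `b`. Numbering them gives coordinates
`κ : X → X/J × Fin 3` whose fibres are the `b`-classes. By the modular law, for `b ≤ A` the
condition `a ⊓ A = ⊥` is equivalent to `A ⊓ J = b`: `A` separates the `b`-classes inside each
`J`-class. With three `A`-classes this means that `A` is obtained by relabelling the `b`-classes of
each `J`-class by a permutation of `Fin 3`, unique once the permutation on one fixed `J`-class is
the identity. So there are `(3!) ^ 2 = 36` such `A`, and two points in different `b`-classes are
separated by a suitable relabelling, so the intersection of all of them is `b`.
-/

open Function

universe u

theorem Nat.card_eq_card_mul_of_card_fiber {α β : Type*} [Finite α] [Finite β] (f : α → β)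
    {k : ℕ} (h : ∀ y, Nat.card {x // f x = y} = k) : Nat.card α = Nat.card β * k := by
  have := Fintype.ofFinite β
  rw [← Nat.card_congr (Equiv.sigmaFiberEquiv f), Nat.card_sigma]
  simp [h]

theorem Nat.card_subtype_apply_eq {M G : Type*} [Finite M] [Finite G] (j₀ : M) (c : G) :
    Nat.card {g : M → G // g j₀ = c} = Nat.card G ^ (Nat.card M - 1) := by
  classical
  let e : {g : M → G // g j₀ = c} ≃ ({j // j ≠ j₀} → G) :=
    { toFun g j := g.1 j
      invFun h := ⟨fun j => if hj : j = j₀ then c else h ⟨j, hj⟩, by simp⟩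
      left_inv g := by ext j; by_cases hj : j = j₀ <;> simp [hj, g.2]
      right_inv h := by ext j; simp [j.2] }
  have hM : Nat.card M = Nat.card {j // j ≠ j₀} + 1 := by
    rw [← Nat.card_congr (Equiv.optionSubtypeNe j₀), Finite.card_option]
  rw [Nat.card_congr e, Nat.card_fun, hM, Nat.add_sub_cancel]

namespace Setoid

variable {X : Type*}

theorem ncard_classes (r : Setoid X) : r.classes.ncard = Nat.card (Quotient r) := by
  rw [← Nat.card_coe_set_eq]
  exact Nat.card_congr r.quotientEquivClasses.symm

theorem card_rel_eq_of_forall_ncard {r : Setoid X} {k : ℕ}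
    (h : ∀ c ∈ r.classes, c.ncard = k) (x : X) : Nat.card {y // r y x} = k :=
  (Nat.card_coe_set_eq _).trans (h _ (r.mem_classes x))

end Setoid

namespace Permutes

open Setoid

variable {X : Type u} {a b : Setoid X}

theorem sup_iff (h : Permutes a b) {x z : X} : (a ⊔ b) x z ↔ ∃ y, a x y ∧ b y z := by
  let c : Setoid X :=
    { r x z := ∃ y, a x y ∧ b y z
      iseqv :=
        { refl x := ⟨x, a.refl' x, b.refl' x⟩
          symm := by
            rintro x z ⟨y, hxy, hyz⟩
            obtain ⟨u, hxu, huz⟩ := (h x z).1 ⟨y, hxy, hyz⟩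
            exact ⟨u, a.symm' huz, b.symm' hxu⟩
          trans := by
            rintro x z w ⟨y, hxy, hyz⟩ ⟨y', hzy', hy'w⟩
            obtain ⟨u, hyu, huy'⟩ := (h y y').2 ⟨z, hyz, hzy'⟩
            exact ⟨u, a.trans' hxy hyu, b.trans' huy' hy'w⟩ } }
  refine ⟨fun hxz => ?_, fun ⟨y, hxy, hyz⟩ => ?_⟩
  · have hle : a ⊔ b ≤ c :=
      sup_le (fun {x y} hxy => ⟨y, hxy, b.refl' y⟩) (fun {x y} hxy => ⟨x, a.refl' x, hxy⟩)
    exact hle hxz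
  · exact (a ⊔ b).trans' (le_sup_left (b := b) hxy) (le_sup_right (a := a) hyz)

/-- Dedekind's modular law. -/
theorem inf_sup_eq (h : Permutes a b) {A : Setoid X} (hb : b ≤ A) :
    A ⊓ (a ⊔ b) = A ⊓ a ⊔ b := by
  refine le_antisymm (fun {x z} hxz => ?_) (le_inf (sup_le inf_le_left hb) ?_)
  · obtain ⟨hA, hab⟩ := hxz
    obtain ⟨y, hxy, hyz⟩ := h.sup_iff.1 hab
    have hAxy : A x y := A.trans' hA (A.symm' (hb hyz))
    exact (A ⊓ a ⊔ b).trans' (le_sup_left (b := b) (inf_iff_and.2 ⟨hAxy, hxy⟩))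
      (le_sup_right (a := A ⊓ a) hyz)
  · exact sup_le_sup_right inf_le_right b

theorem inf_eq_bot_iff (h : Permutes a b) (hab : a ⊓ b = ⊥) {A : Setoid X} (hb : b ≤ A) :
    a ⊓ A = ⊥ ↔ A ⊓ (a ⊔ b) = b := by
  refine ⟨fun haA => by rw [h.inf_sup_eq hb, inf_comm, haA, bot_sup_eq], fun hA => ?_⟩
  rw [← hab, ← hA, ← inf_assoc, inf_comm a A, inf_assoc, inf_sup_self]

theorem exists_coordinates [Finite X] (h : Permutes a b) (hab : a ⊓ b = ⊥) {p : ℕ}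
    (ha : ∀ c ∈ a.classes, c.ncard = p) :
    ∃ (M : Type u) (κ : X → M × Fin p),
      Surjective κ ∧ ker κ = b ∧ ker (Prod.fst ∘ κ) = a ⊔ b := by
  let π : Quotient b → Quotient (a ⊔ b) :=
    Quotient.map' id fun _ _ hxy => (le_sup_right : b ≤ a ⊔ b) hxy
  have hfib : ∀ j, Nat.card {β // π β = j} = p := by
    rintro ⟨x⟩
    let f : {y // a y x} → {β // π β = ⟦x⟧} :=
      fun y => ⟨⟦y.1⟧, Quotient.sound ((le_sup_left : a ≤ a ⊔ b) y.2)⟩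
    rw [← card_rel_eq_of_forall_ncard ha x]
    refine (Nat.card_eq_of_bijective f ⟨?_, ?_⟩).symm
    · rintro ⟨y, hy⟩ ⟨y', hy'⟩ hyy'
      have hb : b y y' := Quotient.exact (congrArg Subtype.val hyy')
      have : (a ⊓ b) y y' := inf_iff_and.2 ⟨a.trans' hy (a.symm' hy'), hb⟩
      rw [hab] at this
      exact Subtype.ext this
    · rintro ⟨⟨z⟩, hz⟩
      obtain ⟨y, hxy, hyz⟩ := h.sup_iff.1 ((a ⊔ b).symm' (Quotient.exact hz))
      exact ⟨⟨y, a.symm' hxy⟩, Subtype.ext (Quotient.sound hyz)⟩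
  let w : Quotient b ≃ Quotient (a ⊔ b) × Fin p :=
    (Equiv.sigmaFiberEquiv π).symm.trans
      ((Equiv.sigmaCongrRight fun j => Finite.equivFinOfCardEq (hfib j)).trans
        (Equiv.sigmaEquivProd _ _))
  have hw : ∀ β, (w β).1 = π β := fun β => by simp [w]
  refine ⟨_, fun x => w ⟦x⟧, w.surjective.comp Quotient.mk_surjective, ?_, ?_⟩
  · ext x y
    simp only [ker_def, w.apply_eq_iff_eq, Quotient.eq]
  · ext x y
    simp only [ker_def, comp_apply, hw]
    exact Quotient.eq

end Permutes

namespace Setoid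

variable {X M : Type*} {p : ℕ}

def relabel (κ : X → M × Fin p) (g : M → Equiv.Perm (Fin p)) : Setoid X :=
  ker fun x => g (κ x).1 (κ x).2

variable {κ : X → M × Fin p}

theorem relabel_iff {g : M → Equiv.Perm (Fin p)} {x y : X} :
    relabel κ g x y ↔ g (κ x).1 (κ x).2 = g (κ y).1 (κ y).2 := Iff.rfl

theorem ker_le_relabel (g : M → Equiv.Perm (Fin p)) : ker κ ≤ relabel κ g :=
  fun {x y} hxy => by rw [relabel_iff, ker_def.1 hxy]

theorem relabel_inf_ker_fst (g : M → Equiv.Perm (Fin p)) :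
    relabel κ g ⊓ ker (Prod.fst ∘ κ) = ker κ := by
  refine le_antisymm (fun {x y} hxy => ?_) (le_inf (ker_le_relabel g) fun {x y} hxy => ?_)
  · obtain ⟨hl, hj : (κ x).1 = (κ y).1⟩ := inf_iff_and.1 hxy
    rw [relabel_iff, hj] at hl
    exact Prod.ext hj ((g _).injective hl)
  · exact congrArg Prod.fst (ker_def.1 hxy)

theorem ncard_classes_relabel [Nonempty M] (hκ : Surjective κ) (g : M → Equiv.Perm (Fin p)) :
    (relabel κ g).classes.ncard = p := by
  have hsurj : Surjective fun x => g (κ x).1 (κ x).2 := fun i => by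
    let j : M := Classical.arbitrary M
    obtain ⟨x, hx⟩ := hκ (j, (g j).symm i)
    exact ⟨x, by simp [hx]⟩
  rw [ncard_classes, relabel, Nat.card_congr (quotientKerEquivOfSurjective _ hsurj), Nat.card_fin]

theorem ncard_of_mem_classes_relabel [Finite X] [Finite M] {q : ℕ}
    (hq : ∀ y, Nat.card {x // κ x = y} = q) (g : M → Equiv.Perm (Fin p)) :
    ∀ c ∈ (relabel κ g).classes, c.ncard = Nat.card M * q := by
  rintro _ ⟨x, rfl⟩
  rw [← Nat.card_coe_set_eq]
  refine Nat.card_eq_card_mul_of_card_fiber (fun y : {y | relabel κ g y x} => (κ y).1) fun j => ?_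
  rw [← hq (j, (g j).symm (g (κ x).1 (κ x).2))]
  refine Nat.card_congr ((Equiv.subtypeSubtypeEquivSubtypeInter
    (· ∈ {y | relabel κ g y x}) fun y => (κ y).1 = j).trans
    (Equiv.subtypeEquivRight fun y => ?_))
  simp only [Set.mem_ofPred_eq, relabel_iff, Prod.ext_iff, Equiv.eq_symm_apply]
  constructor
  · rintro ⟨h1, rfl⟩; exact ⟨rfl, h1⟩
  · rintro ⟨rfl, h1⟩; exact ⟨h1, rfl⟩

theorem relabel_injOn (hκ : Surjective κ) (j₀ : M) : Set.InjOn (relabel κ) {g | g j₀ = 1} := by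
  rintro g (hg : g j₀ = 1) g' (hg' : g' j₀ = 1) hgg'
  ext j i : 2
  have hx := surjInv_eq hκ (j, i)
  have hy := surjInv_eq hκ (j₀, g j i)
  have hxy : relabel κ g (surjInv hκ (j, i)) (surjInv hκ (j₀, g j i)) := by
    simp [relabel_iff, hx, hy, hg]
  rw [hgg', relabel_iff, hx, hy, hg'] at hxy
  exact hxy.symm

theorem exists_relabel_eq [Finite X] (hκ : Surjective κ) (j₀ : M) {A : Setoid X}
    (hA : A.classes.ncard = p) (hκA : ker κ ≤ A) (hAκ : A ⊓ ker (Prod.fst ∘ κ) ≤ ker κ) :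
    ∃ g : M → Equiv.Perm (Fin p), g j₀ = 1 ∧ relabel κ g = A := by
  let s := surjInv hκ
  have hs : ∀ x, (⟦s (κ x)⟧ : Quotient A) = ⟦x⟧ :=
    fun x => Quotient.sound (hκA (ker_def.2 (surjInv_eq hκ (κ x))))
  have hE : ∀ j, Bijective fun i => (⟦s (j, i)⟧ : Quotient A) := fun j => by
    refine (Nat.bijective_iff_injective_and_card _).2 ⟨fun i i' hii' => ?_, ?_⟩
    · have h := hAκ (inf_iff_and.2 ⟨Quotient.exact hii', ?_⟩)
      · simpa [ker_def, s, surjInv_eq hκ] using h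
      · simp [ker_def, s, surjInv_eq hκ]
    · rw [Nat.card_fin, ← ncard_classes, hA]
  let E j := Equiv.ofBijective _ (hE j)
  refine ⟨fun j => (E j).trans (E j₀).symm, Equiv.self_trans_symm _, ?_⟩
  ext x y
  simp only [relabel_iff, Equiv.trans_apply, (E j₀).symm.apply_eq_iff_eq, E,
    Equiv.ofBijective_apply, Prod.mk.eta, hs, Quotient.eq]

theorem exists_not_relabel (hp : 1 < p) (j₀ : M) {x y : X} (hxy : (κ x).1 ≠ (κ y).1) :
    ∃ g : M → Equiv.Perm (Fin p), g j₀ = 1 ∧ ¬ relabel κ g x y := by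
  classical
  wlog hy : (κ y).1 ≠ j₀ generalizing x y
  · obtain ⟨g, hg, hgxy⟩ := this hxy.symm (by rwa [not_not.1 hy] at hxy)
    exact ⟨g, hg, fun h => hgxy ((relabel κ g).symm' h)⟩
  have := Fin.nontrivial_iff_two_le.2 hp
  obtain ⟨t, ht⟩ := exists_ne (κ x).2
  refine ⟨update 1 (κ y).1 (Equiv.swap (κ y).2 t), by simp [Ne.symm hy], ?_⟩
  simp [relabel_iff, hxy, Ne.symm ht]

theorem sInf_image_relabel (hp : 1 < p) (j₀ : M) :
    sInf (relabel κ '' {g | g j₀ = 1}) = ker κ := by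
  refine le_antisymm (fun {x y} hxy => ?_) (le_sInf ?_)
  · have hrel : ∀ g, g j₀ = 1 → relabel κ g x y := fun g hg =>
      le_def.1 (sInf_le (Set.mem_image_of_mem (relabel κ) hg)) hxy
    by_cases hj : (κ x).1 = (κ y).1
    · have hi : (κ x).2 = (κ y).2 := by simpa [relabel_iff, hj] using hrel 1 rfl
      exact Prod.ext hj hi
    · obtain ⟨g, hg, hgxy⟩ := exists_not_relabel hp j₀ hj
      exact absurd (hrel g hg) hgxy
  · rintro _ ⟨g, -, rfl⟩
    exact ker_le_relabel g

end Setoid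

namespace Permutes

open Setoid

variable {X M : Type*} {a b : Setoid X} {p : ℕ} {κ : X → M × Fin p}

theorem setOf_eq_image_relabel [Finite X] [Finite M] [Nonempty M] (h : Permutes a b)
    (hab : a ⊓ b = ⊥) (hκ : Surjective κ) (hb : ker κ = b) (hJ : ker (Prod.fst ∘ κ) = a ⊔ b)
    {q : ℕ} (hq : ∀ c ∈ b.classes, c.ncard = q) (j₀ : M) :
    {A : Setoid X | A.classes.ncard = p ∧ (∀ c ∈ A.classes, c.ncard = Nat.card M * q) ∧
      b ≤ A ∧ a ⊓ A = ⊥} = relabel κ '' {g | g j₀ = 1} := by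
  have hfib : ∀ y, Nat.card {x // κ x = y} = q := fun y => by
    obtain ⟨x, rfl⟩ := hκ y
    have := card_rel_eq_of_forall_ncard hq x
    rw [← hb] at this
    simpa only [ker_def] using this
  ext A
  constructor
  · rintro ⟨hA, -, hbA, haA⟩
    rw [h.inf_eq_bot_iff hab hbA, ← hJ, ← hb] at haA
    exact exists_relabel_eq hκ j₀ hA (hb ▸ hbA) haA.le
  · rintro ⟨g, -, rfl⟩
    have hbA : b ≤ relabel κ g := hb ▸ ker_le_relabel g
    refine ⟨ncard_classes_relabel hκ g, ncard_of_mem_classes_relabel hfib g, hbA, ?_⟩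
    rw [h.inf_eq_bot_iff hab hbA, ← hJ, ← hb]
    exact relabel_inf_ker_fst g

end Permutes

theorem stmt_16_general (a b : Setoid (Fin 3 → Fin 3))
    (ha2 : ∀ c ∈ a.classes, c.ncard = 3)
    (hb1 : b.classes.ncard = 9) (hb2 : ∀ c ∈ b.classes, c.ncard = 3)
    (hperm : Permutes a b) (hmeet : a ⊓ b = ⊥) :
    {A : Setoid (Fin 3 → Fin 3) | A.classes.ncard = 3 ∧
        (∀ c ∈ A.classes, c.ncard = 9) ∧ b ≤ A ∧ a ⊓ A = ⊥}.ncard = 36 ∧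
    sInf {A : Setoid (Fin 3 → Fin 3) | A.classes.ncard = 3 ∧
        (∀ c ∈ A.classes, c.ncard = 9) ∧ b ≤ A ∧ a ⊓ A = ⊥} = b := by
  obtain ⟨M, κ, hκ, hb, hJ⟩ := hperm.exists_coordinates hmeet ha2
  have : Finite M := Finite.of_surjective _ (Prod.fst_surjective.comp hκ)
  let j₀ : M := (κ 0).1
  have : Nonempty M := ⟨j₀⟩
  have hm : Nat.card M = 3 := by
    have := Nat.card_congr (Setoid.quotientKerEquivOfSurjective κ hκ)
    rw [hb, ← Setoid.ncard_classes, hb1, Nat.card_prod, Nat.card_fin] at this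
    omega
  rw [show (9 : ℕ) = Nat.card M * 3 by omega,
    hperm.setOf_eq_image_relabel hmeet hκ hb hJ hb2 j₀, Setoid.sInf_image_relabel (by norm_num) j₀,
    hb, (Setoid.relabel_injOn hκ j₀).ncard_image, ← Nat.card_coe_set_eq, Set.coe_ofPred,
    Nat.card_subtype_apply_eq, hm, Nat.card_perm, Nat.card_fin]
  exact ⟨rfl, rfl⟩

theorem stmt_16 (a b : Setoid (Fin 3 → Fin 3))
    (ha1 : a.classes.ncard = 9) (ha2 : ∀ c ∈ a.classes, c.ncard = 3)
    (hb1 : b.classes.ncard = 9) (hb2 : ∀ c ∈ b.classes, c.ncard = 3)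
    (hperm : Permutes a b) (hmeet : a ⊓ b = ⊥) :
    {A : Setoid (Fin 3 → Fin 3) | A.classes.ncard = 3 ∧
        (∀ c ∈ A.classes, c.ncard = 9) ∧ b ≤ A ∧ a ⊓ A = ⊥}.ncard = 36 ∧
    sInf {A : Setoid (Fin 3 → Fin 3) | A.classes.ncard = 3 ∧
        (∀ c ∈ A.classes, c.ncard = 9) ∧ b ≤ A ∧ a ⊓ A = ⊥} = b :=
  stmt_16_general a b ha2 hb1 hb2 hperm hmeet
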